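/- arXiv:1407.7686 — 4 statements merged into one kernel-verified Lean document; each statement's English description precedes it below -/
import Mathlib

section
/- Let X be an n×p real matrix and A a p×k real matrix with AᵀA = I_k. Then a p×k real matrix B₀ minimizes the function B ↦ trace((X − X·B·Aᵀ)ᵀ(X − X·B·Aᵀ)) over all p×k real matrices B if and only if B₀ minimizes the function B ↦ trace((X·A − X·B)ᵀ(X·A − X·B)) over all p×k real matrices B. -/
open Matrix

lemma key_eq
    (n p k : ℕ)
    (X : Matrix (Fin n) (Fin p) ℝ)
    (A : Matrix (Fin p) (Fin k) ℝ)
    (hA : Aᵀ * A = 1)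
    (B : Matrix (Fin p) (Fin k) ℝ) :
    Matrix.trace ((X - X * B * Aᵀ)ᵀ * (X - X * B * Aᵀ)) =
      Matrix.trace ((X * A - X * B)ᵀ * (X * A - X * B)) +
        (Matrix.trace (Xᵀ * X) - Matrix.trace (Aᵀ * (Xᵀ * (X * A)))) := by
  have h1 : Matrix.trace ((X * B * Aᵀ)ᵀ * (X * B * Aᵀ)) =
      Matrix.trace ((X * B)ᵀ * (X * B)) := by
    have : (X * B * Aᵀ)ᵀ * (X * B * Aᵀ) = A * ((X * B)ᵀ * (X * B)) * Aᵀ := by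
      simp [Matrix.transpose_mul, Matrix.mul_assoc]
    rw [this, Matrix.trace_mul_comm, ← Matrix.mul_assoc, hA, Matrix.one_mul]
  have h2 : Matrix.trace (Xᵀ * (X * B * Aᵀ)) =
      Matrix.trace ((X * A)ᵀ * (X * B)) := by
    rw [show Xᵀ * (X * B * Aᵀ) = (Xᵀ * (X * B)) * Aᵀ by
      simp [Matrix.mul_assoc], Matrix.trace_mul_comm]
    simp [Matrix.transpose_mul, Matrix.mul_assoc]
  have h3 : Matrix.trace ((X * B * Aᵀ)ᵀ * X) =
      Matrix.trace ((X * B)ᵀ * (X * A)) := by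
    simp [Matrix.transpose_mul, Matrix.mul_assoc, Matrix.trace_mul_comm (A)]
  simp only [Matrix.transpose_sub, Matrix.sub_mul, Matrix.mul_sub,
    Matrix.trace_sub]
  rw [h1, h2, h3]
  have h4 : Matrix.trace ((X * A)ᵀ * (X * A)) =
      Matrix.trace (Aᵀ * (Xᵀ * (X * A))) := by
    simp [Matrix.transpose_mul, Matrix.mul_assoc]
  rw [h4]; ring

theorem minimizer_iff
    (n p k : ℕ)
    (X : Matrix (Fin n) (Fin p) ℝ)
    (A : Matrix (Fin p) (Fin k) ℝ)
    (hA : Aᵀ * A = 1)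
    (B₀ : Matrix (Fin p) (Fin k) ℝ) :
    (∀ B : Matrix (Fin p) (Fin k) ℝ,
        Matrix.trace ((X - X * B₀ * Aᵀ)ᵀ * (X - X * B₀ * Aᵀ)) ≤
          Matrix.trace ((X - X * B * Aᵀ)ᵀ * (X - X * B * Aᵀ))) ↔
      (∀ B : Matrix (Fin p) (Fin k) ℝ,
        Matrix.trace ((X * A - X * B₀)ᵀ * (X * A - X * B₀)) ≤
          Matrix.trace ((X * A - X * B)ᵀ * (X * A - X * B))) := by
  constructor
  · intro h B
    have := h B
    rw [key_eq n p k X A hA B, key_eq n p k X A hA B₀] at this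
    linarith
  · intro h B
    rw [key_eq n p k X A hA B, key_eq n p k X A hA B₀]
    linarith [h B]
end

section
/- Let X be an n×p real matrix and B a p×k real matrix. Suppose Xᵀ·X·B = U · diagonal(s) · Vᵀ, where U is a p×k real matrix with UᵀU = I_k, V is a k×k real matrix with VᵀV = I_k and V·Vᵀ = I_k, and s : Fin k → ℝ is nonnegative. Then for every p×k real matrix A with AᵀA = I_k, trace(Xᵀ·X·B·Aᵀ) ≤ Σ_j s_j. -/
open Matrix

theorem trace_procrustes_upper_bound
    (n p k : ℕ)
    (X : Matrix (Fin n) (Fin p) ℝ)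
    (B : Matrix (Fin p) (Fin k) ℝ)
    (U : Matrix (Fin p) (Fin k) ℝ)
    (V : Matrix (Fin k) (Fin k) ℝ)
    (s : Fin k → ℝ)
    (hSVD : Xᵀ * X * B = U * Matrix.diagonal s * Vᵀ)
    (hU : Uᵀ * U = 1)
    (hV1 : Vᵀ * V = 1) (hV2 : V * Vᵀ = 1)
    (hs : ∀ j, 0 ≤ s j) :
    ∀ A : Matrix (Fin p) (Fin k) ℝ, Aᵀ * A = 1 →
      Matrix.trace (Xᵀ * X * B * Aᵀ) ≤ ∑ j, s j := by
  intro A hA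
  set W := A * V with hWdef
  have hW : Wᵀ * W = 1 := by
    rw [hWdef, transpose_mul, Matrix.mul_assoc, ← Matrix.mul_assoc Aᵀ, hA,
      Matrix.one_mul, hV1]
  have htr : Matrix.trace (Xᵀ * X * B * Aᵀ)
      = ∑ j, s j * ∑ i, W i j * U i j := by
    rw [hSVD]
    have : U * Matrix.diagonal s * Vᵀ * Aᵀ = (U * Matrix.diagonal s) * Wᵀ := by
      rw [hWdef, transpose_mul, Matrix.mul_assoc]
    rw [this, Matrix.trace_mul_comm, ← Matrix.mul_assoc]
    simp only [Matrix.trace, Matrix.diag, Matrix.mul_diagonal]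
    refine Finset.sum_congr rfl fun j _ => ?_
    rw [Matrix.mul_apply, Finset.mul_sum, Finset.sum_mul]
    refine Finset.sum_congr rfl fun i _ => ?_
    simp [Matrix.transpose_apply]; ring
  rw [htr]
  apply Finset.sum_le_sum
  intro j _
  have hbound : ∑ i, W i j * U i j ≤ 1 := by
    have h1 : ∑ i, W i j ^ 2 = 1 := by
      have := congrFun (congrFun hW j) j
      simpa [Matrix.mul_apply, Matrix.one_apply, sq] using this
    have h2 : ∑ i, U i j ^ 2 = 1 := by
      have := congrFun (congrFun hU j) j
      simpa [Matrix.mul_apply, Matrix.one_apply, sq] using this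
    have hcs := Finset.sum_mul_sq_le_sq_mul_sq Finset.univ (fun i => W i j) (fun i => U i j)
    rw [h1, h2, one_mul] at hcs
    nlinarith [hcs]
  calc s j * ∑ i, W i j * U i j ≤ s j * 1 := by
        exact mul_le_mul_of_nonneg_left hbound (hs j)
    _ = s j := mul_one _
end

section
/- Let X be an n×p real matrix and B a p×k real matrix. Suppose Xᵀ·X·B = U · diagonal(s) · Vᵀ, where U is a p×k real matrix with UᵀU = I_k, V is a k×k real matrix with VᵀV = I_k and V·Vᵀ = I_k, and s : Fin k → ℝ is nonnegative. Then the choice A = U·Vᵀ satisfies AᵀA = I_k and achieves trace(Xᵀ·X·B·Aᵀ) = Σ_j s_j. -/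
open Matrix

theorem procrustes_attainment
    (n p k : ℕ)
    (X : Matrix (Fin n) (Fin p) ℝ)
    (B : Matrix (Fin p) (Fin k) ℝ)
    (U : Matrix (Fin p) (Fin k) ℝ)
    (V : Matrix (Fin k) (Fin k) ℝ)
    (s : Fin k → ℝ)
    (hSVD : Xᵀ * X * B = U * Matrix.diagonal s * Vᵀ)
    (hU : Uᵀ * U = 1)
    (hV1 : Vᵀ * V = 1) (hV2 : V * Vᵀ = 1)
    (hs : ∀ j, 0 ≤ s j) :
    (U * Vᵀ)ᵀ * (U * Vᵀ) = 1 ∧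
      Matrix.trace (Xᵀ * X * B * (U * Vᵀ)ᵀ) = ∑ j, s j := by
  constructor
  · rw [transpose_mul, transpose_transpose]
    rw [Matrix.mul_assoc, ← Matrix.mul_assoc Uᵀ, hU, Matrix.one_mul, hV2]
  · rw [hSVD, transpose_mul, transpose_transpose]
    have : U * Matrix.diagonal s * Vᵀ * (V * Uᵀ)
        = U * Matrix.diagonal s * Uᵀ := by
      rw [Matrix.mul_assoc, ← Matrix.mul_assoc Vᵀ, hV1, Matrix.one_mul]
    rw [this, Matrix.trace_mul_cycle, hU, Matrix.one_mul,
      Matrix.trace_diagonal]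
end

section
/- Let X be an n×p real matrix and B a p×k real matrix. Suppose Xᵀ·X·B = U · diagonal(s) · Vᵀ, where U is a p×k real matrix with UᵀU = I_k, V is a k×k real matrix with VᵀV = I_k and V·Vᵀ = I_k, and s : Fin k → ℝ is nonnegative. Let Â = U·Vᵀ. Then for every p×k real matrix A with AᵀA = I_k, trace((X − X·B·Âᵀ)ᵀ(X − X·B·Âᵀ)) ≤ trace((X − X·B·Aᵀ)ᵀ(X − X·B·Aᵀ)); that is, Â = UVᵀ minimizes ‖X − XBAᵀ‖_F² over all p×k matrices A with orthonormal columns. -/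
open Matrix

lemma expand_trace {n p k : ℕ}
    (X : Matrix (Fin n) (Fin p) ℝ) (B : Matrix (Fin p) (Fin k) ℝ)
    (C : Matrix (Fin p) (Fin k) ℝ) (hC : Cᵀ * C = 1) :
    Matrix.trace ((X - X * B * Cᵀ)ᵀ * (X - X * B * Cᵀ)) =
      Matrix.trace (Xᵀ * X) + Matrix.trace (Bᵀ * (Xᵀ * X) * B)
        - 2 * Matrix.trace (Cᵀ * (Xᵀ * X * B)) := by
  have h1 : Matrix.trace ((X * B * Cᵀ)ᵀ * (X * B * Cᵀ)) = Matrix.trace (Bᵀ * (Xᵀ * X) * B) := by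
    have : (X * B * Cᵀ)ᵀ * (X * B * Cᵀ) = C * (Bᵀ * (Xᵀ * X) * B) * Cᵀ := by
      simp [transpose_mul, Matrix.mul_assoc]
    rw [this, Matrix.trace_mul_comm, ← Matrix.mul_assoc, hC, Matrix.one_mul]
  have h2 : Matrix.trace (Xᵀ * (X * B * Cᵀ)) = Matrix.trace (Cᵀ * (Xᵀ * X * B)) := by
    rw [← Matrix.mul_assoc, ← Matrix.mul_assoc, Matrix.trace_mul_comm]
  have h3 : Matrix.trace ((X * B * Cᵀ)ᵀ * X) = Matrix.trace (Cᵀ * (Xᵀ * X * B)) := by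
    rw [← Matrix.trace_transpose ((X * B * Cᵀ)ᵀ * X), transpose_mul, transpose_transpose, h2]
  rw [transpose_sub, Matrix.sub_mul, Matrix.mul_sub, Matrix.mul_sub,
    Matrix.trace_sub, Matrix.trace_sub, Matrix.trace_sub, h1, h2, h3]
  ring

theorem procrustes_minimizer
    (n p k : ℕ)
    (X : Matrix (Fin n) (Fin p) ℝ)
    (B : Matrix (Fin p) (Fin k) ℝ)
    (U : Matrix (Fin p) (Fin k) ℝ)
    (V : Matrix (Fin k) (Fin k) ℝ)
    (s : Fin k → ℝ)
    (hSVD : Xᵀ * X * B = U * Matrix.diagonal s * Vᵀ)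
    (hU : Uᵀ * U = 1)
    (hV1 : Vᵀ * V = 1) (hV2 : V * Vᵀ = 1)
    (hs : ∀ j, 0 ≤ s j) :
    ∀ A : Matrix (Fin p) (Fin k) ℝ, Aᵀ * A = 1 →
      Matrix.trace ((X - X * B * (U * Vᵀ)ᵀ)ᵀ * (X - X * B * (U * Vᵀ)ᵀ)) ≤
        Matrix.trace ((X - X * B * Aᵀ)ᵀ * (X - X * B * Aᵀ)) := by
  intro A hA
  have hAhat : (U * Vᵀ)ᵀ * (U * Vᵀ) = 1 := by
    simp only [transpose_mul, transpose_transpose, Matrix.mul_assoc]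
    rw [← Matrix.mul_assoc Uᵀ U Vᵀ, hU, Matrix.one_mul, hV2]
  rw [expand_trace X B _ hAhat, expand_trace X B A hA]
  have hhat : Matrix.trace ((U * Vᵀ)ᵀ * (Xᵀ * X * B)) = ∑ j, s j := by
    rw [hSVD, transpose_mul, transpose_transpose]
    have : V * Uᵀ * (U * Matrix.diagonal s * Vᵀ) = V * Matrix.diagonal s * Vᵀ := by
      rw [show V * Uᵀ * (U * Matrix.diagonal s * Vᵀ) = V * (Uᵀ * U) * Matrix.diagonal s * Vᵀ by
        simp [Matrix.mul_assoc], hU, Matrix.mul_one]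
    rw [this, Matrix.trace_mul_comm, ← Matrix.mul_assoc, hV1, Matrix.one_mul,
      Matrix.trace_diagonal]
  have hAtrace : Matrix.trace (Aᵀ * (Xᵀ * X * B)) =
      ∑ j, (Vᵀ * Aᵀ * U) j j * s j := by
    rw [hSVD]
    have : Aᵀ * (U * Matrix.diagonal s * Vᵀ) = (Aᵀ * U * Matrix.diagonal s) * Vᵀ := by
      simp [Matrix.mul_assoc]
    rw [this, Matrix.trace_mul_comm]
    have : Vᵀ * (Aᵀ * U * Matrix.diagonal s) = (Vᵀ * Aᵀ * U) * Matrix.diagonal s := by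
      simp [Matrix.mul_assoc]
    rw [this]
    simp [Matrix.trace, Matrix.diag, Matrix.mul_diagonal]
  have hdiag : ∀ j, (Vᵀ * Aᵀ * U) j j ≤ 1 := by
    intro j
    have hrw : (Vᵀ * Aᵀ * U) j j = ∑ a, (A * V) a j * U a j := by
      rw [Matrix.mul_apply]
      congr 1; ext a
      rw [show Vᵀ * Aᵀ = (A * V)ᵀ by rw [transpose_mul]]
      simp [Matrix.transpose_apply, mul_comm]
    have hAV : ∑ a, (A * V) a j ^ 2 = 1 := by
      have h : ((A * V)ᵀ * (A * V)) j j = 1 := by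
        rw [transpose_mul, show Vᵀ * Aᵀ * (A * V) = Vᵀ * (Aᵀ * A) * V by simp [Matrix.mul_assoc],
          hA, Matrix.mul_one, hV1]
        simp
      rw [← h, Matrix.mul_apply]
      congr 1; ext a
      simp [Matrix.transpose_apply, sq]
    have hUU : ∑ a, U a j ^ 2 = 1 := by
      have h : (Uᵀ * U) j j = 1 := by rw [hU]; simp
      rw [← h, Matrix.mul_apply]
      congr 1; ext a
      simp [Matrix.transpose_apply, sq]
    have cs := Finset.sum_mul_sq_le_sq_mul_sq Finset.univ
      (fun a => (A * V) a j) (fun a => U a j)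
    rw [hAV, hUU, one_mul] at cs
    rw [hrw]
    nlinarith [cs]
  have hle : ∑ j, (Vᵀ * Aᵀ * U) j j * s j ≤ ∑ j, s j := by
    apply Finset.sum_le_sum
    intro j _
    calc (Vᵀ * Aᵀ * U) j j * s j ≤ 1 * s j :=
      mul_le_mul_of_nonneg_right (hdiag j) (hs j)
    _ = s j := one_mul _
  rw [hhat, hAtrace]
  linarith
end
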